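/- arXiv:0808.2686 — 2 statements merged into one kernel-verified Lean document; each statement's English description precedes it below -/
import Mathlib

section
/- In the setting of Lemma 3.4 (H = ⟨C, a⟩ with C ∩ ⟨a⟩ = 1, a normalizing C and conjugation by a order-preserving on C), if additionally a E a⁻¹ = E for every <-convex subgroup E of C, then the convex subgroups of H under the constructed right-order ≺ are exactly {1} and the subgroups ⟨a, E⟩ where E is a convex subgroup of C. -/
variable {G : Type*} [Group G]

/-- A right order on a group: a strict total order invariant under right multiplication. -/
def IsRightOrder (r : G → G → Prop) : Prop :=
  IsStrictTotalOrder G r ∧ ∀ f g h : G, r f g → r (f * h) (g * h)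

/-- `a` is the least element greater than the identity for the order `r`. -/
def LeastPos (r : G → G → Prop) (a : G) : Prop :=
  r 1 a ∧ ∀ g : G, r 1 g → g = a ∨ r a g

/-- `E` is a convex subgroup of `C` with respect to the order `r`. -/
def ConvexSubgroupOf (r : G → G → Prop) (C E : Subgroup G) : Prop :=
  E ≤ C ∧ ∀ x y z : G, x ∈ E → z ∈ E → y ∈ C → r x y → r y z → y ∈ E

/-- The subgroup `H = ⟨C, a⟩`. -/
def Hsub (C : Subgroup G) (a : G) : Subgroup G :=
  C ⊔ Subgroup.zpowers a

/-- The constructed right order `≺` on `H = ⟨C, a⟩`, via the positive cone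
`P = {aⁿc : c ∈ C, with 1 < c, or c = 1 and n > 0}`. -/
def ConstructedOrder (r : G → G → Prop) (C : Subgroup G) (a : G) :
    Hsub C a → Hsub C a → Prop :=
  fun x y => ∃ (n : ℤ) (c : G), c ∈ C ∧ ((y * x⁻¹ : Hsub C a) : G) = a ^ n * c ∧
    (r 1 c ∨ (c = 1 ∧ 0 < n))

/-!
Every element of `H` is uniquely `aⁿc` with `c ∈ C`, and since conjugation by powers of `a`
preserves positivity in `C`, the projection `aⁿc ↦ c` is weakly monotone for `≺`. Hence
`⟨a⟩E` is convex whenever `E` is convex in `C` and normalized by `a`, and `1` is convex because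
`P ∩ P⁻¹ = ∅`. Conversely, a nontrivial convex `K` contains some `g ≻ 1`; since `a` is the least
element of `P`, `1 ≺ a ≼ g` puts `a` in `K`, and then `K = ⟨a⟩(C ∩ K)` with `C ∩ K` convex
in `C`.
-/

namespace IsRightOrder

variable {r : G → G → Prop}

theorem lt_iff_one_lt_mul_inv (hr : IsRightOrder r) {x y : G} : r x y ↔ r 1 (y * x⁻¹) :=
  ⟨fun h => by simpa using hr.2 x y x⁻¹ h, fun h => by simpa using hr.2 1 (y * x⁻¹) x h⟩

theorem one_lt_pow_succ (hr : IsRightOrder r) {g : G} (hg : r 1 g) : ∀ n : ℕ, r 1 (g ^ (n + 1))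
  | 0 => by simpa using hg
  | n + 1 => hr.1.trans _ _ _ (one_lt_pow_succ hr hg n) <| by
      rw [pow_succ' g (n + 1)]
      simpa using hr.2 1 g (g ^ (n + 1)) hg

theorem not_isOfFinOrder (hr : IsRightOrder r) {g : G} (hg : g ≠ 1) : ¬IsOfFinOrder g := by
  have of_one_lt : ∀ h : G, r 1 h → ¬IsOfFinOrder h := by
    intro h hh hfin
    obtain ⟨n, hn, hpow⟩ := isOfFinOrder_iff_pow_eq_one.1 hfin
    obtain ⟨m, rfl⟩ := Nat.exists_eq_add_one_of_ne_zero hn.ne'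
    exact hr.1.irrefl 1 (hpow ▸ hr.one_lt_pow_succ hh m)
  have := hr.1
  rcases trichotomous_of r 1 g with h | h | h
  · exact of_one_lt g h
  · exact absurd h.symm hg
  · rw [← isOfFinOrder_inv_iff]
    exact of_one_lt g⁻¹ (by simpa using hr.lt_iff_one_lt_mul_inv.1 h)

end IsRightOrder

theorem ConvexSubgroupOf.mem_of_between {r : G → G → Prop} {C E : Subgroup G}
    (hE : ConvexSubgroupOf r C E) {u c v : G} (hu : u ∈ E) (hv : v ∈ E) (hc : c ∈ C)
    (huc : u = c ∨ r u c) (hcv : c = v ∨ r c v) : c ∈ E := by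
  rcases huc with rfl | huc
  · exact hu
  rcases hcv with rfl | hcv
  · exact hv
  exact hE.2 u c v hu hv hc huc hcv

def IsConvexSubgroup {H : Type*} [Group H] (ρ : H → H → Prop) (K : Subgroup H) : Prop :=
  ∀ x y z : H, x ∈ K → z ∈ K → ρ x y → ρ y z → y ∈ K

section

open Subgroup

variable {r : G → G → Prop} {C : Subgroup G} {a : G}

theorem mem_zpowers_sup_iff {D : Subgroup G} (hD : a ∈ normalizer D) {g : G} :
    g ∈ zpowers a ⊔ D ↔ ∃ n : ℤ, ∃ d ∈ D, a ^ n * d = g := by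
  rw [← SetLike.mem_coe,
    coe_mul_of_left_le_normalizer_right _ _ (zpowers_le.2 hD), Set.mem_mul]
  simp only [SetLike.mem_coe, mem_zpowers_iff, exists_exists_eq_and]

theorem mem_hsub_iff (hN : a ∈ normalizer C) {g : G} :
    g ∈ Hsub C a ↔ ∃ n : ℤ, ∃ c ∈ C, a ^ n * c = g := by
  rw [Hsub, sup_comm]
  exact mem_zpowers_sup_iff hN

theorem eq_and_eq_of_zpow_mul_eq (ha : ¬IsOfFinOrder a) (hC : C ⊓ zpowers a = ⊥) {n m : ℤ}
    {c d : G} (hc : c ∈ C) (hd : d ∈ C) (h : a ^ n * c = a ^ m * d) : n = m ∧ c = d := by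
  have hmem : (a ^ m)⁻¹ * a ^ n ∈ C ⊓ zpowers a := by
    refine mem_inf.2 ⟨?_, ?_⟩
    · rw [show (a ^ m)⁻¹ * a ^ n = d * c⁻¹ by
        rw [inv_mul_eq_iff_eq_mul, ← mul_assoc, eq_mul_inv_iff_mul_eq, h]]
      exact mul_mem hd (inv_mem hc)
    · exact mul_mem (inv_mem (zpow_mem_zpowers a m)) (zpow_mem_zpowers a n)
  rw [hC, mem_bot, inv_mul_eq_one] at hmem
  have hnm : n = m := injective_zpow_iff_not_isOfFinOrder.2 ha hmem.symm
  subst hnm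
  exact ⟨rfl, mul_left_cancel h⟩

theorem eq_zpowers_sup_inf {K : Subgroup G} (hN : a ∈ normalizer C)
    (hK : K ≤ zpowers a ⊔ C) (haK : a ∈ K) : K = zpowers a ⊔ (C ⊓ K) := by
  refine le_antisymm (fun g hg => ?_) (sup_le (zpowers_le.2 haK) inf_le_right)
  obtain ⟨n, c, hc, rfl⟩ := (mem_zpowers_sup_iff hN).1 (hK hg)
  have hcK : c ∈ K := by simpa using mul_mem (inv_mem (zpow_mem haK n)) hg
  exact mul_mem (mem_sup_left (zpow_mem_zpowers a n))
    (mem_sup_right ⟨hc, hcK⟩)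

theorem one_lt_conj_zpow_iff (hN : a ∈ normalizer C)
    (hpos : ∀ c ∈ C, r 1 c ↔ r 1 (a * c * a⁻¹)) (k : ℤ) :
    ∀ c ∈ C, r 1 (a ^ k * c * (a ^ k)⁻¹) ↔ r 1 c := by
  induction k using Int.induction_on with
  | zero => simp
  | succ k ih =>
    intro c hc
    rw [← ih c hc, hpos _ ((mem_normalizer_iff.1 (zpow_mem hN k) c).1 hc)]
    group
  | pred k ih =>
    intro c hc
    rw [← ih c hc, hpos _ ((mem_normalizer_iff.1 (zpow_mem hN _) c).1 hc)]
    group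

def posCone (r : G → G → Prop) (C : Subgroup G) (a : G) : Set G :=
  {g | ∃ (n : ℤ) (c : G), c ∈ C ∧ g = a ^ n * c ∧ (r 1 c ∨ (c = 1 ∧ 0 < n))}

theorem constructedOrder_iff {x y : Hsub C a} :
    ConstructedOrder r C a x y ↔ (y : G) * (x : G)⁻¹ ∈ posCone r C a :=
  Iff.rfl

theorem self_mem_posCone : a ∈ posCone r C a :=
  ⟨1, 1, C.one_mem, by simp, Or.inr ⟨rfl, one_pos⟩⟩

theorem mul_inv_mem_posCone (hr : IsRightOrder r) {c c' : G} (hc : c ∈ C) (hc' : c' ∈ C)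
    (h : r c c') : c' * c⁻¹ ∈ posCone r C a :=
  ⟨0, c' * c⁻¹, mul_mem hc' (inv_mem hc), by simp, Or.inl (hr.lt_iff_one_lt_mul_inv.1 h)⟩

theorem zpow_mul_mem_posCone_iff (ha : ¬IsOfFinOrder a) (hC : C ⊓ zpowers a = ⊥) {n : ℤ}
    {c : G} (hc : c ∈ C) : a ^ n * c ∈ posCone r C a ↔ r 1 c ∨ (c = 1 ∧ 0 < n) := by
  refine ⟨fun ⟨m, d, hd, h, hpos⟩ => ?_, fun h => ⟨n, c, hc, rfl, h⟩⟩
  obtain ⟨rfl, rfl⟩ := eq_and_eq_of_zpow_mul_eq ha hC hc hd h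
  exact hpos

theorem mem_posCone_or_inv_mem (hr : IsRightOrder r) (hN : a ∈ normalizer C)
    (hpos : ∀ c ∈ C, r 1 c ↔ r 1 (a * c * a⁻¹)) {g : G} (hg : g ∈ Hsub C a) (hg1 : g ≠ 1) :
    g ∈ posCone r C a ∨ g⁻¹ ∈ posCone r C a := by
  obtain ⟨n, c, hc, rfl⟩ := (mem_hsub_iff hN).1 hg
  have := hr.1
  rcases trichotomous_of r 1 c with h | rfl | h
  · exact Or.inl ⟨n, c, hc, rfl, Or.inl h⟩
  · have hn : n ≠ 0 := by rintro rfl; simp at hg1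
    rcases hn.lt_or_gt with hn | hn
    · exact Or.inr ⟨-n, 1, C.one_mem, by simp, Or.inr ⟨rfl, by omega⟩⟩
    · exact Or.inl ⟨n, 1, C.one_mem, rfl, Or.inr ⟨rfl, hn⟩⟩
  · have hconj : a ^ n * c⁻¹ * (a ^ n)⁻¹ ∈ C :=
      (mem_normalizer_iff.1 (zpow_mem hN n) _).1 (inv_mem hc)
    refine Or.inr ⟨-n, _, hconj, by group, Or.inl ?_⟩
    rw [one_lt_conj_zpow_iff hN hpos n _ (inv_mem hc)]
    simpa using hr.lt_iff_one_lt_mul_inv.1 h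

theorem eq_or_mul_inv_mem_posCone (hN : a ∈ normalizer C)
    (hpos : ∀ c ∈ C, r 1 c ↔ r 1 (a * c * a⁻¹)) {g : G} (hg : g ∈ posCone r C a) :
    g = a ∨ g * a⁻¹ ∈ posCone r C a := by
  obtain ⟨n, c, hc, rfl, h | ⟨rfl, hn⟩⟩ := hg
  · exact Or.inr ⟨n - 1, a * c * a⁻¹, (mem_normalizer_iff.1 hN c).1 hc, by group,
      Or.inl ((hpos c hc).1 h)⟩
  · rcases (Int.add_one_le_of_lt hn).eq_or_lt with rfl | hn
    · exact Or.inl (by simp)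
    · exact Or.inr ⟨n - 1, 1, C.one_mem, by group, Or.inr ⟨rfl, by omega⟩⟩

theorem eq_or_lt_of_mul_inv_mem_posCone (hr : IsRightOrder r) (ha : ¬IsOfFinOrder a)
    (hC : C ⊓ zpowers a = ⊥) (hN : a ∈ normalizer C)
    (hpos : ∀ c ∈ C, r 1 c ↔ r 1 (a * c * a⁻¹)) {n k : ℤ} {c u : G} (hc : c ∈ C) (hu : u ∈ C)
    (h : a ^ n * c * (a ^ k * u)⁻¹ ∈ posCone r C a) : u = c ∨ r u c := by
  have hcu : c * u⁻¹ ∈ C := mul_mem hc (inv_mem hu)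
  rw [show a ^ n * c * (a ^ k * u)⁻¹ = a ^ (n - k) * (a ^ k * (c * u⁻¹) * (a ^ k)⁻¹) by group,
    zpow_mul_mem_posCone_iff ha hC ((mem_normalizer_iff.1 (zpow_mem hN k) _).1 hcu),
    one_lt_conj_zpow_iff hN hpos k _ hcu, conj_eq_one_iff, mul_inv_eq_one,
    ← hr.lt_iff_one_lt_mul_inv] at h
  rcases h with h | ⟨rfl, -⟩
  · exact Or.inr h
  · exact Or.inl rfl

theorem inv_notMem_posCone (hr : IsRightOrder r) (ha : ¬IsOfFinOrder a)
    (hC : C ⊓ zpowers a = ⊥) (hN : a ∈ normalizer C)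
    (hpos : ∀ c ∈ C, r 1 c ↔ r 1 (a * c * a⁻¹)) {g : G} (hg : g ∈ posCone r C a) :
    g⁻¹ ∉ posCone r C a := by
  intro hg'
  obtain ⟨n, c, hc, rfl, hnc⟩ := id hg
  have h1 := eq_or_lt_of_mul_inv_mem_posCone (k := 0) hr ha hC hN hpos hc C.one_mem
    (by simpa using hg)
  have h2 := eq_or_lt_of_mul_inv_mem_posCone (n := 0) hr ha hC hN hpos C.one_mem hc
    (by simpa using hg')
  have hc1 : c = 1 := by
    rcases h1 with rfl | h1
    · rfl
    rcases h2 with rfl | h2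
    · rfl
    exact (hr.1.irrefl 1 (hr.1.trans _ _ _ h1 h2)).elim
  subst hc1
  rw [show (a ^ n * 1)⁻¹ = a ^ (-n) * 1 by group, zpow_mul_mem_posCone_iff ha hC C.one_mem]
    at hg'
  have hirr := hr.1.irrefl 1
  simp only [hirr, true_and, false_or] at hnc hg'
  omega

theorem exists_mem_posCone_of_ne_bot (hr : IsRightOrder r) (hN : a ∈ normalizer C)
    (hpos : ∀ c ∈ C, r 1 c ↔ r 1 (a * c * a⁻¹)) {K : Subgroup (Hsub C a)} (hK : K ≠ ⊥) :
    ∃ g ∈ K, (g : G) ∈ posCone r C a := by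
  obtain ⟨g, hgK, hg1⟩ := (K.bot_or_exists_ne_one).resolve_left hK
  rcases mem_posCone_or_inv_mem hr hN hpos g.2 (by simpa using hg1) with h | h
  · exact ⟨g, hgK, h⟩
  · exact ⟨g⁻¹, inv_mem hgK, h⟩

theorem IsConvexSubgroup.self_mem_map (hr : IsRightOrder r) (hN : a ∈ normalizer C)
    (hpos : ∀ c ∈ C, r 1 c ↔ r 1 (a * c * a⁻¹)) {K : Subgroup (Hsub C a)}
    (hK : IsConvexSubgroup (ConstructedOrder r C a) K) (hKbot : K ≠ ⊥) :
    a ∈ K.map (Hsub C a).subtype := by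
  obtain ⟨g, hgK, hg⟩ := exists_mem_posCone_of_ne_bot hr hN hpos hKbot
  let a' : Hsub C a := ⟨a, mem_sup_right (mem_zpowers a)⟩
  refine ⟨a', ?_, rfl⟩
  rcases eq_or_mul_inv_mem_posCone hN hpos hg with h | h
  · rwa [show a' = g from Subtype.ext h.symm]
  · exact hK 1 a' g (one_mem K) hgK (by simpa [constructedOrder_iff] using self_mem_posCone) h

theorem IsConvexSubgroup.convexSubgroupOf_inf_map (hr : IsRightOrder r)
    {K : Subgroup (Hsub C a)} (hK : IsConvexSubgroup (ConstructedOrder r C a) K) :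
    ConvexSubgroupOf r C (C ⊓ K.map (Hsub C a).subtype) := by
  refine ⟨inf_le_left, fun x y z hx hz hy hxy hyz => ⟨hy, ?_⟩⟩
  obtain ⟨hxC, x', hx', rfl⟩ := hx
  obtain ⟨hzC, z', hz', rfl⟩ := hz
  exact ⟨⟨y, mem_sup_left hy⟩, hK x' _ z' hx' hz' (mul_inv_mem_posCone hr hxC hy hxy)
    (mul_inv_mem_posCone hr hy hzC hyz), rfl⟩

theorem IsConvexSubgroup.eq_bot_or_map_eq (hr : IsRightOrder r) (hN : a ∈ normalizer C)
    (hpos : ∀ c ∈ C, r 1 c ↔ r 1 (a * c * a⁻¹)) {K : Subgroup (Hsub C a)}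
    (hK : IsConvexSubgroup (ConstructedOrder r C a) K) :
    K = ⊥ ∨ ∃ E : Subgroup G, ConvexSubgroupOf r C E ∧
      K.map (Hsub C a).subtype = zpowers a ⊔ E := by
  refine or_iff_not_imp_left.2 fun hKbot => ⟨_, hK.convexSubgroupOf_inf_map hr,
    eq_zpowers_sup_inf hN ?_ (hK.self_mem_map hr hN hpos hKbot)⟩
  exact (map_subtype_le K).trans (sup_comm C (zpowers a)).le

theorem isConvexSubgroup_bot (hr : IsRightOrder r) (ha : ¬IsOfFinOrder a)
    (hC : C ⊓ zpowers a = ⊥) (hN : a ∈ normalizer C)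
    (hpos : ∀ c ∈ C, r 1 c ↔ r 1 (a * c * a⁻¹)) :
    IsConvexSubgroup (ConstructedOrder r C a) ⊥ := by
  rintro x y z rfl rfl hxy hyz
  exact (inv_notMem_posCone hr ha hC hN hpos (by simpa [constructedOrder_iff] using hxy)
    (by simpa [constructedOrder_iff] using hyz)).elim

theorem isConvexSubgroup_of_map_eq (hr : IsRightOrder r) (ha : ¬IsOfFinOrder a)
    (hC : C ⊓ zpowers a = ⊥) (hN : a ∈ normalizer C)
    (hpos : ∀ c ∈ C, r 1 c ↔ r 1 (a * c * a⁻¹)) {E : Subgroup G} (hE : ConvexSubgroupOf r C E)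
    (hEa : a ∈ normalizer E) {K : Subgroup (Hsub C a)}
    (hK : K.map (Hsub C a).subtype = zpowers a ⊔ E) :
    IsConvexSubgroup (ConstructedOrder r C a) K := by
  have hmem : ∀ w : Hsub C a, w ∈ K ↔ (w : G) ∈ zpowers a ⊔ E := fun w => by
    rw [← hK, ← coe_subtype, mem_map_iff_mem (subtype_injective _)]
  intro x y z hx hz hxy hyz
  obtain ⟨k, u, hu, hxu⟩ := (mem_zpowers_sup_iff hEa).1 ((hmem x).1 hx)
  obtain ⟨m, v, hv, hzv⟩ := (mem_zpowers_sup_iff hEa).1 ((hmem z).1 hz)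
  obtain ⟨n, c, hc, hyc⟩ := (mem_hsub_iff hN).1 y.2
  rw [constructedOrder_iff, ← hxu, ← hyc] at hxy
  rw [constructedOrder_iff, ← hyc, ← hzv] at hyz
  have hcE : c ∈ E := hE.mem_of_between hu hv hc
    (eq_or_lt_of_mul_inv_mem_posCone hr ha hC hN hpos hc (hE.1 hu) hxy)
    (eq_or_lt_of_mul_inv_mem_posCone hr ha hC hN hpos (hE.1 hv) hc hyz)
  rw [hmem, ← hyc]
  exact mul_mem (mem_sup_left (zpow_mem_zpowers a n)) (mem_sup_right hcE)

end

theorem stmt11_general (r : G → G → Prop) (hr : IsRightOrder r)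
    (C : Subgroup G) (a : G) (ha : a ≠ 1)
    (hint : C ⊓ Subgroup.zpowers a = ⊥)
    (hconj : ∀ c ∈ C, ∀ c' ∈ C, (r c c' ↔ r (a * c * a⁻¹) (a * c' * a⁻¹)))
    (hconvfix : ∀ E : Subgroup G, ConvexSubgroupOf r C E →
      ∀ c : G, c ∈ E ↔ a * c * a⁻¹ ∈ E) :
    ∀ K : Subgroup (Hsub C a),
      (∀ x y z : Hsub C a, x ∈ K → z ∈ K →
          ConstructedOrder r C a x y → ConstructedOrder r C a y z → y ∈ K) ↔
      (K = ⊥ ∨ ∃ E : Subgroup G, ConvexSubgroupOf r C E ∧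
        Subgroup.map (Hsub C a).subtype K = Subgroup.zpowers a ⊔ E) := by
  have hnormalizer : ∀ E, ConvexSubgroupOf r C E → a ∈ Subgroup.normalizer E :=
    fun E hE => Subgroup.mem_normalizer_iff.2 (hconvfix E hE)
  -- `C` is convex in itself, so `a` normalizes `C`.
  have hN : a ∈ Subgroup.normalizer C := hnormalizer C ⟨le_rfl, fun _ _ _ _ _ hy _ _ => hy⟩
  have hpos : ∀ c ∈ C, r 1 c ↔ r 1 (a * c * a⁻¹) := fun c hc => by
    simpa using hconj 1 C.one_mem c hc
  have hfin := hr.not_isOfFinOrder ha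
  intro K
  refine ⟨fun hK => IsConvexSubgroup.eq_bot_or_map_eq hr hN hpos hK, ?_⟩
  rintro (rfl | ⟨E, hE, hK⟩)
  · exact isConvexSubgroup_bot hr hfin hint hN hpos
  · exact isConvexSubgroup_of_map_eq hr hfin hint hN hpos hE (hnormalizer E hE) hK

theorem stmt11 (r : G → G → Prop) (hr : IsRightOrder r)
    (C : Subgroup G) (a : G) (ha : a ≠ 1)
    (hint : C ⊓ Subgroup.zpowers a = ⊥)
    (hnorm : ∀ c ∈ C, a * c * a⁻¹ ∈ C)
    (hnorm' : ∀ c ∈ C, a⁻¹ * c * a ∈ C)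
    (hconj : ∀ c ∈ C, ∀ c' ∈ C, (r c c' ↔ r (a * c * a⁻¹) (a * c' * a⁻¹)))
    (hconj' : ∀ c ∈ C, ∀ c' ∈ C, (r c c' ↔ r (a⁻¹ * c * a) (a⁻¹ * c' * a)))
    (hconvfix : ∀ E : Subgroup G, ConvexSubgroupOf r C E →
      ∀ c : G, c ∈ E ↔ a * c * a⁻¹ ∈ E) :
    ∀ K : Subgroup (Hsub C a),
      (∀ x y z : Hsub C a, x ∈ K → z ∈ K →
          ConstructedOrder r C a x y → ConstructedOrder r C a y z → y ∈ K) ↔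
      (K = ⊥ ∨ ∃ E : Subgroup G, ConvexSubgroupOf r C E ∧
        Subgroup.map (Hsub C a).subtype K = Subgroup.zpowers a ⊔ E) :=
  stmt11_general r hr C a ha hint hconj hconvfix
end

section
/- Let G = ⟨a_i : i ∈ ℤ⟩ with relations [a_i, a_j] = 1 for |i−j| > 1 and a_{i+1} a_i a_{i+1}⁻¹ = a_i⁻¹, and let ⟨G, u⟩ be the extension by an infinite cyclic group ⟨u⟩ with u⁻¹ a_i u = a_i⁻¹ for all i. Then ⟨G, u⟩ is right-orderable but admits no discrete right-order. -/
variable {G : Type*} [Group G]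

/-- Relations for the group `⟨G, u⟩`, where `G = ⟨aᵢ (i ∈ ℤ) | [aᵢ, aⱼ] = 1 for |i-j| > 1,
a_{i+1} aᵢ a_{i+1}⁻¹ = aᵢ⁻¹⟩` and `u⁻¹ aᵢ u = aᵢ⁻¹` for all `i`.  The generator
`some i` is `aᵢ` and `none` is `u`. -/
def guRels : Set (FreeGroup (Option ℤ)) :=
  {w | (∃ i j : ℤ, 1 < |i - j| ∧
          w = FreeGroup.of (some i) * FreeGroup.of (some j) *
            (FreeGroup.of (some i))⁻¹ * (FreeGroup.of (some j))⁻¹) ∨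
       (∃ i : ℤ, w = FreeGroup.of (some (i + 1)) * FreeGroup.of (some i) *
            (FreeGroup.of (some (i + 1)))⁻¹ * FreeGroup.of (some i)) ∨
       (∃ i : ℤ, w = (FreeGroup.of none)⁻¹ * FreeGroup.of (some i) *
            FreeGroup.of none * FreeGroup.of (some i))}

/-- The group `⟨G, u⟩`. -/
abbrev GuGroup := PresentedGroup guRels


/-!
The group is modelled by pairs `(v, k) : (ℤ → ℤ) × ℤ` with product
`(v, k) * (w, l) = (fun j ↦ v j + (-1) ^ (v (j + 1) + k) * w j, k + l)`, where `v` lists the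
exponents of the ascending normal form `a_lo ^ v lo * ⋯ * a_hi ^ v hi * u ^ k`. Pushing a generator
through a normal form from the right shows that every element has one, so the model is faithful.

Ordering by `k` first and then by the sign of the top nonzero coordinate of `v` gives a right
order. Now let `(v, k)` be the least positive element of some right order. If `v (i + 1) + k` is
odd for some `i`, it conjugates `aᵢ²` to its inverse. Otherwise `k = 2m` and every `v j` is even,
and it splits as `c * d` with `c² = d²`. Neither can happen to a least positive element.
-/

namespace IsRightOrder

variable {H : Type*} [Group H] {r : H → H → Prop}

theorem irrefl (hr : IsRightOrder r) (x : H) : ¬ r x x :=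
  hr.1.toIsStrictOrder.toIrrefl.irrefl x

theorem trans (hr : IsRightOrder r) {x y z : H} (hxy : r x y) (hyz : r y z) : r x z :=
  hr.1.toIsStrictOrder.toIsTrans.trans x y z hxy hyz

theorem asymm (hr : IsRightOrder r) {x y : H} (hxy : r x y) (hyx : r y x) : False :=
  hr.irrefl x (hr.trans hxy hyx)

theorem trichotomous (hr : IsRightOrder r) (x y : H) : r x y ∨ x = y ∨ r y x :=
  haveI := hr.1; _root_.trichotomous x y

theorem mul_right (hr : IsRightOrder r) {x y : H} (h : r x y) (z : H) : r (x * z) (y * z) :=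
  hr.2 x y z h

theorem inv_lt_one (hr : IsRightOrder r) {x : H} (h : r 1 x) : r x⁻¹ 1 := by
  simpa using hr.mul_right h x⁻¹

theorem one_lt_inv (hr : IsRightOrder r) {x : H} (h : r x 1) : r 1 x⁻¹ := by
  simpa using hr.mul_right h x⁻¹

theorem one_lt_mul (hr : IsRightOrder r) {x y : H} (hx : r 1 x) (hy : r 1 y) : r 1 (x * y) :=
  hr.trans hy (by simpa using hr.mul_right hx y)

theorem mul_lt_one (hr : IsRightOrder r) {x y : H} (hx : r x 1) (hy : r y 1) : r (x * y) 1 :=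
  hr.trans (by simpa using hr.mul_right hx y) hy

theorem one_lt_of_one_lt_mul_self (hr : IsRightOrder r) {x : H} (h : r 1 (x * x)) : r 1 x := by
  rcases hr.trichotomous 1 x with hx | rfl | hx
  · exact hx
  · exact absurd h (by simpa using hr.irrefl 1)
  · exact (hr.asymm h (hr.mul_lt_one hx hx)).elim

theorem lt_one_of_mul_self_lt_one (hr : IsRightOrder r) {x : H} (h : r (x * x) 1) : r x 1 := by
  rcases hr.trichotomous 1 x with hx | rfl | hx
  · exact (hr.asymm h (hr.one_lt_mul hx hx)).elim
  · exact absurd h (by simpa using hr.irrefl 1)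
  · exact hx

-- For `1 < b`: either `b = a`, so `a * a = 1`, or `a < b`, so `1 < b * a⁻¹ = a⁻¹ * b⁻¹`,
-- whence `b < a⁻¹ < 1`.
theorem conj_ne_inv_of_leastPos (hr : IsRightOrder r) {a b : H} (ha : LeastPos r a) (hb : b ≠ 1) :
    a * b * a⁻¹ ≠ b⁻¹ := by
  intro hab
  suffices key : ∀ b : H, r 1 b → a * b * a⁻¹ = b⁻¹ → False by
    rcases hr.trichotomous 1 b with h | h | h
    · exact key b h hab
    · exact hb h.symm
    · refine key b⁻¹ (hr.one_lt_inv h) ?_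
      rw [show a * b⁻¹ * a⁻¹ = (a * b * a⁻¹)⁻¹ by group, hab]
  intro b hb hab
  rcases ha.2 b hb with rfl | hab'
  · have : b * b = 1 := by
      calc b * b = (b * b * b⁻¹) * b := by group
        _ = 1 := by rw [hab, inv_mul_cancel]
    exact hr.irrefl 1 (this ▸ hr.one_lt_mul hb hb)
  · have h1 : r 1 (a⁻¹ * b⁻¹) := by
      rw [show a⁻¹ * b⁻¹ = b * a⁻¹ by rw [← hab]; group]
      simpa using hr.mul_right hab' a⁻¹
    have h2 : r b a⁻¹ := by simpa using hr.mul_right h1 b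
    exact hr.asymm (hr.trans hb h2) (hr.inv_lt_one ha.1)

theorem mul_self_ne_mul_self_of_leastPos (hr : IsRightOrder r) {c d : H}
    (hcd : LeastPos r (c * d)) : c * c ≠ d * d := by
  intro hsq
  rcases hr.trichotomous 1 c with hc | rfl | hc
  · have hd : r 1 d := hr.one_lt_of_one_lt_mul_self (hsq ▸ hr.one_lt_mul hc hc)
    rcases hcd.2 d hd with h | h
    · have : c = 1 := by simpa using h
      exact hr.irrefl 1 (this ▸ hc)
    · exact hr.asymm hc (by simpa using hr.mul_right h d⁻¹)
  · have hd : r 1 d := by simpa using hcd.1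
    exact hr.irrefl 1 (by simpa [← hsq] using hr.one_lt_mul hd hd)
  · have hd : r d 1 := hr.lt_one_of_mul_self_lt_one (hsq ▸ hr.mul_lt_one hc hc)
    exact hr.asymm hcd.1 (hr.mul_lt_one hc hd)

theorem of_positiveCone (P : H → Prop) (hone : ¬ P 1)
    (hmul : ∀ x y, P x → P y → P (x * y)) (htotal : ∀ x, x ≠ 1 → P x ∨ P x⁻¹) :
    IsRightOrder fun f g ↦ P (g * f⁻¹) := by
  refine ⟨{ trichotomous := fun f g hfg hgf ↦ ?_
            irrefl := fun f ↦ by simpa using hone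
            trans := fun f g h hfg hgh ↦ by simpa [mul_assoc] using hmul _ _ hgh hfg }, ?_⟩
  · by_contra hne
    rcases htotal (g * f⁻¹) (by simpa [mul_inv_eq_one, eq_comm] using hne) with h | h
    · exact hfg h
    · exact hgf (by simpa using h)
  · intro f g h hfg
    simpa [mul_assoc] using hfg

end IsRightOrder

theorem Int.negOnePow_units_mul (u : ℤˣ) (n : ℤ) : ((u : ℤ) * n).negOnePow = n.negOnePow := by
  rcases Int.units_eq_one_or u with rfl | rfl <;> simp

theorem zpow_conj_eq_zpow_negOnePow {H : Type*} [Group H] {g x : H} (h : g * x * g⁻¹ = x⁻¹)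
    (s : ℤ) : g ^ s * x * (g ^ s)⁻¹ = x ^ (s.negOnePow : ℤ) := by
  have h' : g⁻¹ * x * g = x⁻¹ := by
    calc g⁻¹ * x * g = g⁻¹ * (x⁻¹)⁻¹ * g := by rw [inv_inv]
      _ = g⁻¹ * (g * x * g⁻¹)⁻¹ * g := by rw [h]
      _ = x⁻¹ := by group
  induction s using Int.induction_on with
  | zero => simp
  | succ s ih =>
    calc g ^ ((s : ℤ) + 1) * x * (g ^ ((s : ℤ) + 1))⁻¹
        = g ^ (s : ℤ) * (g * x * g⁻¹) * (g ^ (s : ℤ))⁻¹ := by group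
      _ = (g ^ (s : ℤ) * x * (g ^ (s : ℤ))⁻¹)⁻¹ := by rw [h]; group
      _ = x ^ (((s : ℤ) + 1).negOnePow : ℤ) := by
        rw [ih, Int.negOnePow_succ, Units.val_neg, zpow_neg]
  | pred s ih =>
    calc g ^ (-(s : ℤ) - 1) * x * (g ^ (-(s : ℤ) - 1))⁻¹
        = g ^ (-(s : ℤ)) * (g⁻¹ * x * g) * (g ^ (-(s : ℤ)))⁻¹ := by group
      _ = (g ^ (-(s : ℤ)) * x * (g ^ (-(s : ℤ)))⁻¹)⁻¹ := by rw [h']; group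
      _ = x ^ ((-(s : ℤ) - 1).negOnePow : ℤ) := by
        rw [ih, Int.negOnePow_sub, Int.negOnePow_one, mul_neg_one, Units.val_neg, zpow_neg]

theorem zpow_mul_zpow_of_conj_eq_inv {H : Type*} [Group H] {g x : H} (h : g * x * g⁻¹ = x⁻¹)
    (s c : ℤ) : g ^ s * x ^ c = x ^ ((s.negOnePow : ℤ) * c) * g ^ s := by
  rw [zpow_mul, ← zpow_conj_eq_zpow_negOnePow h, conj_zpow]; group

namespace GuGroup

@[ext]
structure Model where
  v : ℤ → ℤ
  k : ℤ

namespace Model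

instance : Mul Model :=
  ⟨fun x y ↦ ⟨fun j ↦ x.v j + ((x.v (j + 1) + x.k).negOnePow : ℤ) * y.v j, x.k + y.k⟩⟩

instance : One Model := ⟨⟨0, 0⟩⟩

instance : Inv Model := ⟨fun x ↦ ⟨fun j ↦ -(((x.v (j + 1) + x.k).negOnePow : ℤ) * x.v j), -x.k⟩⟩

@[simp] theorem mul_v (x y : Model) (j : ℤ) :
    (x * y).v j = x.v j + ((x.v (j + 1) + x.k).negOnePow : ℤ) * y.v j := rfl
@[simp] theorem mul_k (x y : Model) : (x * y).k = x.k + y.k := rfl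
@[simp] theorem one_v : (1 : Model).v = 0 := rfl
@[simp] theorem one_k : (1 : Model).k = 0 := rfl
@[simp] theorem inv_v (x : Model) (j : ℤ) :
    x⁻¹.v j = -(((x.v (j + 1) + x.k).negOnePow : ℤ) * x.v j) := rfl
@[simp] theorem inv_k (x : Model) : x⁻¹.k = -x.k := rfl

instance : Group Model where
  mul_assoc x y z := by
    ext j
    · simp only [mul_v, mul_k, Int.negOnePow_add, Int.negOnePow_units_mul]
      simp only [Units.val_mul]
      ring
    · exact add_assoc _ _ _
  one_mul x := by ext <;> simp
  mul_one x := by ext <;> simp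
  inv_mul_cancel x := by
    ext j
    · simp only [mul_v, inv_v, inv_k, one_v, Pi.zero_apply, Int.negOnePow_add,
        Int.negOnePow_neg, Int.negOnePow_units_mul]
      simp only [Units.val_mul]
      ring
    · simp

theorem mul_single (z : Model) (i c : ℤ) :
    z * ⟨Pi.single i c, 0⟩ =
      ⟨Function.update z.v i (z.v i + ((z.v (i + 1) + z.k).negOnePow : ℤ) * c), z.k⟩ := by
  ext j
  · rcases eq_or_ne j i with rfl | hj <;> simp [*]
  · simp

theorem mul_mk_zero (z : Model) (c : ℤ) : z * ⟨0, c⟩ = ⟨z.v, z.k + c⟩ := by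
  ext <;> simp

theorem single_zpow (i c : ℤ) : (⟨Pi.single i 1, 0⟩ : Model) ^ c = ⟨Pi.single i c, 0⟩ := by
  induction c using Int.induction_on with
  | zero => ext <;> simp
  | succ c ih =>
    rw [zpow_add_one, ih, mul_single]
    ext j <;> simp [Pi.single_apply, Function.update_apply]
    split_ifs <;> rfl
  | pred c ih =>
    have : (⟨Pi.single i 1, 0⟩ : Model)⁻¹ = ⟨Pi.single i (-1), 0⟩ := by
      ext j <;> simp [Pi.single_apply]
      split_ifs <;> simp_all
    rw [zpow_sub_one, ih, this, mul_single]
    ext j <;> simp [Pi.single_apply, Function.update_apply]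
    split_ifs <;> ring

theorem mk_zero_zpow (c : ℤ) : (⟨0, 1⟩ : Model) ^ c = ⟨0, c⟩ := by
  induction c using Int.induction_on with
  | zero => rfl
  | succ c ih => rw [zpow_add_one, ih, mul_mk_zero]
  | pred c ih => rw [zpow_sub_one, ih]; ext <;> simp [sub_eq_add_neg]

def gen : Option ℤ → Model
  | some i => ⟨Pi.single i 1, 0⟩
  | none => ⟨0, 1⟩

theorem lift_gen_rel : ∀ w ∈ guRels, FreeGroup.lift gen w = 1 := by
  rintro w (⟨i, j, hij, rfl⟩ | ⟨i, rfl⟩ | ⟨i, rfl⟩) <;>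
  · simp only [map_mul, map_inv, FreeGroup.lift_apply_of, gen]
    try rw [lt_abs] at hij
    ext m <;> simp [Pi.single_apply]
    split_ifs <;> simp_all <;> omega

end Model

def a (i : ℤ) : GuGroup := PresentedGroup.of (some i)

def u : GuGroup := PresentedGroup.of none

noncomputable def toModel : GuGroup →* Model := PresentedGroup.toGroup Model.lift_gen_rel

@[simp] theorem toModel_a (i : ℤ) : toModel (a i) = ⟨Pi.single i 1, 0⟩ :=
  PresentedGroup.toGroup.of _

@[simp] theorem toModel_u : toModel u = ⟨0, 1⟩ :=
  PresentedGroup.toGroup.of _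

theorem a_commute {i j : ℤ} (h : 1 < |i - j|) : Commute (a i) (a j) := by
  have := PresentedGroup.one_of_mem (rels := guRels) (Or.inl ⟨i, j, h, rfl⟩)
  simp only [map_mul, map_inv] at this
  exact commutatorElement_eq_one_iff_commute.mp this

theorem a_succ_conj (i : ℤ) : a (i + 1) * a i * (a (i + 1))⁻¹ = (a i)⁻¹ := by
  have := PresentedGroup.one_of_mem (rels := guRels) (Or.inr (Or.inl ⟨i, rfl⟩))
  simp only [map_mul, map_inv] at this
  exact mul_eq_one_iff_eq_inv.mp this

theorem u_conj (i : ℤ) : u * a i * u⁻¹ = (a i)⁻¹ := by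
  have := PresentedGroup.one_of_mem (rels := guRels) (Or.inr (Or.inr ⟨i, rfl⟩))
  change u⁻¹ * a i * u * a i = 1 at this
  rw [← inv_inj, inv_inv, show (u * a i * u⁻¹)⁻¹ = u * (a i)⁻¹ * u⁻¹ by group,
    ← mul_eq_one_iff_eq_inv.mp this]
  group

theorem a_succ_zpow_mul_a_zpow (i e c : ℤ) :
    a (i + 1) ^ e * a i ^ c = a i ^ ((e.negOnePow : ℤ) * c) * a (i + 1) ^ e :=
  zpow_mul_zpow_of_conj_eq_inv (a_succ_conj i) e c

theorem u_zpow_mul_a_zpow (k i c : ℤ) :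
    u ^ k * a i ^ c = a i ^ ((k.negOnePow : ℤ) * c) * u ^ k :=
  zpow_mul_zpow_of_conj_eq_inv (u_conj i) k c

def orderedProd (v : ℤ → ℤ) (lo : ℤ) : ℕ → GuGroup
  | 0 => 1
  | n + 1 => orderedProd v lo n * a (lo + n) ^ v (lo + n)

theorem orderedProd_congr {v w : ℤ → ℤ} {lo : ℤ} {n : ℕ}
    (h : ∀ j, lo ≤ j → j < lo + n → v j = w j) : orderedProd v lo n = orderedProd w lo n := by
  induction n with
  | zero => rfl
  | succ n ih =>
    simp only [orderedProd]
    rw [ih fun j h₁ h₂ ↦ h j h₁ (by omega), h (lo + n) (by omega) (by omega)]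

theorem orderedProd_eq_one {v : ℤ → ℤ} {lo : ℤ} {n : ℕ}
    (h : ∀ j, lo ≤ j → j < lo + n → v j = 0) : orderedProd v lo n = 1 := by
  rw [orderedProd_congr h]
  clear h
  induction n with
  | zero => rfl
  | succ n ih => simp [orderedProd, ih]

theorem orderedProd_add (v : ℤ → ℤ) (lo : ℤ) (m n : ℕ) :
    orderedProd v lo (m + n) = orderedProd v lo m * orderedProd v (lo + m) n := by
  induction n with
  | zero => simp [orderedProd]
  | succ n ih =>
    rw [← add_assoc, orderedProd, ih, orderedProd, mul_assoc]
    push_cast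
    rw [add_assoc]

theorem orderedProd_eq_of_support {v : ℤ → ℤ} {lo lo' : ℤ} {n n' : ℕ}
    (hv : ∀ j, v j ≠ 0 → lo ≤ j ∧ j < lo + n) (hlo : lo' ≤ lo) (hhi : lo + n ≤ lo' + n') :
    orderedProd v lo' n' = orderedProd v lo n := by
  obtain ⟨p, rfl⟩ : ∃ p : ℕ, lo = lo' + p := ⟨(lo - lo').toNat, by omega⟩
  obtain ⟨q, rfl⟩ : ∃ q : ℕ, n' = p + (n + q) := ⟨n' - p - n, by omega⟩
  have hzero : ∀ j, j < lo' + p ∨ lo' + p + n ≤ j → v j = 0 := fun j hj ↦ by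
    by_contra h; have := hv j h; omega
  rw [orderedProd_add, orderedProd_add,
    orderedProd_eq_one (lo := lo') (n := p) fun j _ hj ↦ hzero j (by omega),
    orderedProd_eq_one (lo := lo' + p + n) (n := q) fun j hj _ ↦ hzero j (by omega),
    one_mul, mul_one]

theorem orderedProd_succ_mul_a_zpow (v : ℤ → ℤ) (lo : ℤ) (n : ℕ) (c : ℤ) :
    orderedProd v lo (n + 1) * a (lo + n) ^ c =
      orderedProd (Function.update v (lo + n) (v (lo + n) + c)) lo (n + 1) := by
  have hlow : orderedProd (Function.update v (lo + n) (v (lo + n) + c)) lo n = orderedProd v lo n :=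
    orderedProd_congr fun j _ hj ↦ Function.update_of_ne (by omega) _ _
  simp only [orderedProd, Function.update_self, zpow_add, mul_assoc, hlow]

-- `a i ^ c` commutes past the factors above `i + 1` and is twisted by `a (i + 1) ^ v (i + 1)`.
theorem orderedProd_mul_a_zpow {v : ℤ → ℤ} {lo i : ℤ} {n : ℕ} (hlo : lo ≤ i) (hhi : i + 1 < lo + n)
    (c : ℤ) : orderedProd v lo n * a i ^ c =
      orderedProd (Function.update v i (v i + ((v (i + 1)).negOnePow : ℤ) * c)) lo n := by
  induction n with
  | zero => omega
  | succ n ih =>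
    have htop : Function.update v i (v i + ((v (i + 1)).negOnePow : ℤ) * c) (lo + n) = v (lo + n) :=
      Function.update_of_ne (by omega) _ _
    simp only [orderedProd, htop]
    rcases lt_or_eq_of_le (show i + 1 ≤ lo + n by omega) with hlt | heq
    · rw [mul_assoc, ((a_commute (by rw [lt_abs]; omega)).zpow_zpow _ _).eq, ← mul_assoc, ih hlt]
    · rw [← heq, mul_assoc, a_succ_zpow_mul_a_zpow, ← mul_assoc]
      congr 1
      obtain ⟨m, rfl⟩ : ∃ m : ℕ, n = m + 1 := ⟨n - 1, by omega⟩
      obtain rfl : i = lo + m := by push_cast at heq; omega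
      exact orderedProd_succ_mul_a_zpow v lo m _

theorem toModel_orderedProd (v : ℤ → ℤ) (lo : ℤ) (n : ℕ) :
    toModel (orderedProd v lo n) = ⟨fun j ↦ if lo ≤ j ∧ j < lo + n then v j else 0, 0⟩ := by
  induction n with
  | zero => ext j <;> simp [orderedProd]
  | succ n ih =>
    rw [orderedProd, map_mul, ih, map_zpow, toModel_a, Model.single_zpow, Model.mul_single]
    ext j <;> simp [Function.update_apply]
    split_ifs <;> first | omega | simp_all

theorem toModel_orderedProd_mul_u_zpow {v : ℤ → ℤ} {lo : ℤ} {n : ℕ}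
    (hv : ∀ j, v j ≠ 0 → lo ≤ j ∧ j < lo + n) (k : ℤ) :
    toModel (orderedProd v lo n * u ^ k) = ⟨v, k⟩ := by
  rw [map_mul, toModel_orderedProd, map_zpow, toModel_u, Model.mk_zero_zpow, Model.mul_mk_zero]
  ext j <;> simp only [zero_add]
  split_ifs with h
  · rfl
  · exact (not_not.mp (mt (hv j) h)).symm

def HasNormalForm (g : GuGroup) : Prop :=
  ∃ (lo : ℤ) (n : ℕ), (∀ j, (toModel g).v j ≠ 0 → lo ≤ j ∧ j < lo + n) ∧
    g = orderedProd (toModel g).v lo n * u ^ (toModel g).k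

theorem HasNormalForm.mul_u_zpow {g : GuGroup} (hg : HasNormalForm g) (c : ℤ) :
    HasNormalForm (g * u ^ c) := by
  obtain ⟨lo, n, hsupp, hnf⟩ := hg
  have hz : toModel (g * u ^ c) = ⟨(toModel g).v, (toModel g).k + c⟩ := by
    rw [map_mul, map_zpow, toModel_u, Model.mk_zero_zpow, Model.mul_mk_zero]
  unfold HasNormalForm
  rw [hz]
  refine ⟨lo, n, hsupp, ?_⟩
  conv_lhs => rw [hnf]
  rw [mul_assoc, zpow_add]

theorem HasNormalForm.mul_a_zpow {g : GuGroup} (hg : HasNormalForm g) (i c : ℤ) :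
    HasNormalForm (g * a i ^ c) := by
  obtain ⟨lo, n, hsupp, hnf⟩ := hg
  generalize hz : toModel g = z at hsupp hnf
  have hz' : toModel (g * a i ^ c) =
      ⟨Function.update z.v i (z.v i + ((z.v (i + 1) + z.k).negOnePow : ℤ) * c), z.k⟩ := by
    rw [map_mul, hz, map_zpow, toModel_a, Model.single_zpow, Model.mul_single]
  unfold HasNormalForm
  rw [hz']
  refine ⟨min lo i, (max (lo + n) (i + 2) - min lo i).toNat, fun j hj ↦ ?_, ?_⟩
  · rcases eq_or_ne j i with rfl | hji
    · omega
    · simp only [Function.update_of_ne hji] at hj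
      have := hsupp j hj
      omega
  · rw [hnf, mul_assoc, u_zpow_mul_a_zpow, ← mul_assoc,
      ← orderedProd_eq_of_support (n' := (max (lo + n) (i + 2) - min lo i).toNat) hsupp
        (min_le_left lo i) (by omega),
      orderedProd_mul_a_zpow (by omega) (by omega), Int.negOnePow_add, Units.val_mul, mul_assoc]

theorem hasNormalForm (g : GuGroup) : HasNormalForm g := by
  have hstep : ∀ g y (c : ℤ), HasNormalForm g → HasNormalForm (g * PresentedGroup.of y ^ c) := by
    rintro g (_ | i) c hg
    exacts [hg.mul_u_zpow c, hg.mul_a_zpow i c]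
  have hg : g ∈ Subgroup.closure (Set.range PresentedGroup.of) := by simp
  induction hg using Subgroup.closure_induction_right with
  | one => exact ⟨0, 0, by simp, by simp [orderedProd]⟩
  | mul_right g _ x hx ih =>
    obtain ⟨y, rfl⟩ := hx
    simpa using hstep g y 1 ih
  | mul_inv_cancel g _ x hx ih =>
    obtain ⟨y, rfl⟩ := hx
    simpa using hstep g y (-1) ih

theorem toModel_injective : Function.Injective toModel := by
  refine (injective_iff_map_eq_one _).mpr fun g hg ↦ ?_
  obtain ⟨lo, n, -, hnf⟩ := hasNormalForm g
  rw [hnf, hg, Model.one_v, Model.one_k, orderedProd_eq_one (v := 0) fun _ _ _ ↦ rfl, zpow_zero,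
    one_mul]

namespace Model

def IsPos (z : Model) : Prop :=
  0 < z.k ∨ z.k = 0 ∧ ∃ T, 0 < z.v T ∧ ∀ j, T < j → z.v j = 0

theorem not_isPos_one : ¬ (1 : Model).IsPos := by
  rintro (h | ⟨-, T, hT, -⟩) <;> simp at *

theorem IsPos.mul {x y : Model} (hx : x.IsPos) (hy : y.IsPos) : (x * y).IsPos := by
  rcases hx with hx | ⟨hxk, Tx, hxT, hx⟩ <;> rcases hy with hy | ⟨hyk, Ty, hyT, hy⟩
  · exact Or.inl (by simp; omega)
  · exact Or.inl (by simp; omega)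
  · exact Or.inl (by simp; omega)
  refine Or.inr ⟨by simp [hxk, hyk], max Tx Ty, ?_, fun j hj ↦ ?_⟩
  · simp only [mul_v, hx (max Tx Ty + 1) (by omega), hxk, add_zero, Int.negOnePow_zero,
      Units.val_one, one_mul]
    rcases lt_trichotomy Tx Ty with h | rfl | h
    · rw [max_eq_right h.le, hx Ty h]; omega
    · rw [max_self]; omega
    · rw [max_eq_left h.le, hy Tx h]; omega
  · simp [hx j (by omega), hy j (by omega)]

theorem isPos_or_isPos_inv {z : Model} (hz : z ≠ 1) (hbdd : ∃ N, ∀ j, N < j → z.v j = 0) :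
    z.IsPos ∨ z⁻¹.IsPos := by
  rcases lt_trichotomy z.k 0 with hk | hk | hk
  · exact Or.inr (Or.inl (by simp; omega))
  · have hv : ∃ j, z.v j ≠ 0 := by
      by_contra! hv
      exact hz (Model.ext (funext hv) hk)
    obtain ⟨N, hN⟩ := hbdd
    obtain ⟨T, hT, htop⟩ := Int.exists_greatest_of_bdd
      ⟨N, fun j hj ↦ by_contra fun h ↦ hj (hN j (not_le.mp h))⟩ hv
    have htop' : ∀ j, T < j → z.v j = 0 := fun j hj ↦ by
      by_contra h; exact absurd (htop j h) (not_le.mpr hj)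
    rcases lt_or_gt_of_ne hT with hneg | hpos
    · refine Or.inr (Or.inr ⟨by simp [hk], T, ?_, fun j hj ↦ by simp [htop' j hj]⟩)
      simp [htop' (T + 1) (by omega), hk]
      omega
    · exact Or.inl (Or.inr ⟨hk, T, hpos, htop'⟩)
  · exact Or.inl (Or.inl hk)

end Model

theorem exists_bound_toModel (g : GuGroup) : ∃ N, ∀ j, N < j → (toModel g).v j = 0 := by
  obtain ⟨lo, n, hsupp, -⟩ := hasNormalForm g
  exact ⟨lo + n, fun j hj ↦ by_contra fun h ↦ absurd (hsupp j h).2 (by omega)⟩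

theorem isRightOrder_isPos_toModel : IsRightOrder fun f g : GuGroup ↦ (toModel (g * f⁻¹)).IsPos :=
  .of_positiveCone (fun g ↦ (toModel g).IsPos) (by simpa using Model.not_isPos_one)
    (fun x y hx hy ↦ by simpa using hx.mul hy)
    fun g hg ↦ by
      simpa using Model.isPos_or_isPos_inv (toModel_injective.ne_iff' (map_one _) |>.mpr hg)
        (exists_bound_toModel g)

namespace Model

theorem mul_single_two {z : Model} {i : ℤ} (h : Odd (z.v (i + 1) + z.k)) :
    z * ⟨Pi.single i 2, 0⟩ = ⟨Pi.single i (-2), 0⟩ * z := by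
  rw [mul_single, Int.negOnePow_odd _ h]
  ext j
  · rcases eq_or_ne j i with rfl | hj
    · simp; ring
    · rcases eq_or_ne (j + 1) i with rfl | hj'
      · simp [hj, Int.negOnePow_neg, Int.negOnePow_even _ even_two]
      · simp [hj, hj']
  · simp

theorem mk_mul_mk_sub {v x : ℤ → ℤ} {m : ℤ}
    (hx : ∀ j, x j = if Even (x (j + 1) + m) then v j / 2 else v j) :
    (⟨x, m⟩ * ⟨v - x, m⟩ : Model) = ⟨v, m + m⟩ := by
  ext j
  · simp only [mul_v, Pi.sub_apply]
    rw [hx j]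
    split_ifs with h
    · rw [Int.negOnePow_even _ h]; simp
    · rw [Int.negOnePow_odd _ (Int.not_even_iff_odd.mp h)]; simp
  · rfl

theorem mk_mul_self_eq {v x : ℤ → ℤ} {m : ℤ} (hv : ∀ j, Even (v j))
    (hx : ∀ j, x j = if Even (x (j + 1) + m) then v j / 2 else v j) :
    (⟨x, m⟩ * ⟨x, m⟩ : Model) = ⟨v - x, m⟩ * ⟨v - x, m⟩ := by
  ext j
  · have hpar : (v (j + 1) - x (j + 1) + m).negOnePow = (x (j + 1) + m).negOnePow := by
      rw [Int.negOnePow_eq_iff]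
      obtain ⟨r, hr⟩ := hv (j + 1)
      exact ⟨r - x (j + 1), by simp [hr]; ring⟩
    simp only [mul_v, Pi.sub_apply, hpar]
    rw [hx j]
    split_ifs with h
    · rw [Int.negOnePow_even _ h]
      obtain ⟨r, hr⟩ := hv j
      simp [hr]
      omega
    · rw [Int.negOnePow_odd _ (Int.not_even_iff_odd.mp h)]; simp
  · rfl

end Model

-- `x` is built downwards from `N + 1`, where it vanishes. For `v` even, `c = (x, m)` and
-- `d = (v - x, m)` then satisfy `c * d = (v, 2m)` and `c * c = d * d`.
theorem exists_eq_ite_half (v : ℤ → ℤ) (m : ℤ) {N : ℤ} (hN : ∀ j, N < j → v j = 0) :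
    ∃ x : ℤ → ℤ, ∀ j, x j = if Even (x (j + 1) + m) then v j / 2 else v j := by
  let X : ℕ → ℤ := fun n ↦
    Nat.rec 0 (fun n Xn ↦ if Even (Xn + m) then v (N - n) / 2 else v (N - n)) n
  have hX : ∀ n : ℕ, X (n + 1) = if Even (X n + m) then v (N - n) / 2 else v (N - n) := fun _ ↦ rfl
  refine ⟨fun j ↦ X (N + 1 - j).toNat, fun j ↦ ?_⟩
  dsimp only
  rcases le_or_gt j N with hj | hj
  · simp only [show (N + 1 - j).toNat = (N - j).toNat + 1 by omega, hX,
      show N + 1 - (j + 1) = N - j by ring, show N - ((N - j).toNat : ℤ) = j by omega]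
  · simp only [show (N + 1 - j).toNat = 0 by omega, show (N + 1 - (j + 1)).toNat = 0 by omega,
      hN j hj]
    simp [X]

section NoDiscreteOrder

variable {r : GuGroup → GuGroup → Prop}

theorem not_leastPos_of_odd (hr : IsRightOrder r) {g : GuGroup} {i : ℤ}
    (hi : Odd ((toModel g).v (i + 1) + (toModel g).k)) : ¬ LeastPos r g := by
  intro hg
  refine hr.conj_ne_inv_of_leastPos hg (b := a i ^ (2 : ℤ)) (fun h ↦ ?_) ?_
  · have := congrArg (fun g ↦ (toModel g).v i) h
    simp only [map_zpow, toModel_a, Model.single_zpow, map_one] at this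
    simp at this
  · rw [mul_inv_eq_iff_eq_mul, ← zpow_neg]
    apply toModel_injective
    simpa only [map_mul, map_zpow, toModel_a, Model.single_zpow] using Model.mul_single_two hi

theorem not_leastPos_of_even (hr : IsRightOrder r) {g : GuGroup}
    (heven : ∀ j, Even ((toModel g).v j + (toModel g).k)) : ¬ LeastPos r g := by
  intro hg
  obtain ⟨lo, n, hsupp, -⟩ := hasNormalForm g
  set z := toModel g
  have hzero : ∀ j, lo + n ≤ j → z.v j = 0 := fun j hj ↦
    by_contra fun h ↦ absurd (hsupp j h).2 (by omega)
  obtain ⟨m, hm⟩ : Even z.k := by simpa [hzero (lo + n) le_rfl] using heven (lo + n)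
  have hv : ∀ j, Even (z.v j) := fun j ↦ (Int.even_add.mp (heven j)).mpr ⟨m, hm⟩
  obtain ⟨x, hx⟩ := exists_eq_ite_half z.v m (N := lo + n) fun j hj ↦ hzero j hj.le
  have hxsupp : ∀ j, x j ≠ 0 → lo ≤ j ∧ j < lo + n := fun j hj ↦
    hsupp j fun h ↦ hj (by rw [hx j, h]; simp)
  have hdsupp : ∀ j, (z.v - x) j ≠ 0 → lo ≤ j ∧ j < lo + n := fun j hj ↦
    hsupp j fun h ↦ hj (by rw [Pi.sub_apply, hx j, h]; simp)
  set c := orderedProd x lo n * u ^ m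
  set d := orderedProd (z.v - x) lo n * u ^ m
  have hc : toModel c = ⟨x, m⟩ := toModel_orderedProd_mul_u_zpow hxsupp m
  have hd : toModel d = ⟨z.v - x, m⟩ := toModel_orderedProd_mul_u_zpow hdsupp m
  refine hr.mul_self_ne_mul_self_of_leastPos (c := c) (d := d) ?_ (toModel_injective ?_)
  · convert hg
    apply toModel_injective
    rw [map_mul, hc, hd, Model.mk_mul_mk_sub hx, ← hm]
  · rw [map_mul toModel c c, map_mul toModel d d, hc, hd, Model.mk_mul_self_eq hv hx]

theorem not_leastPos (hr : IsRightOrder r) (g : GuGroup) : ¬ LeastPos r g := by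
  by_cases hodd : ∃ i, Odd ((toModel g).v (i + 1) + (toModel g).k)
  · obtain ⟨i, hi⟩ := hodd
    exact not_leastPos_of_odd hr hi
  · push Not at hodd
    refine not_leastPos_of_even hr fun j ↦ ?_
    simpa using hodd (j - 1)

end NoDiscreteOrder

end GuGroup

/-- The group `⟨G, u⟩` is right-orderable but admits no discrete right-order. -/
theorem stmt15 :
    (∃ r : GuGroup → GuGroup → Prop, IsRightOrder r) ∧
    ¬ ∃ r : GuGroup → GuGroup → Prop, IsRightOrder r ∧ ∃ a : GuGroup, LeastPos r a :=
  ⟨⟨_, GuGroup.isRightOrder_isPos_toModel⟩,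
    fun ⟨_, hr, g, hg⟩ ↦ GuGroup.not_leastPos hr g hg⟩
end
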